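/- Let n and s be integers with s ≥ 3 and n ≥ 2s + 4, and let F be a stable 3-graph with vertex set [n] that has property U(s, 2s+1), ν(F) ≥ 2, and ν(∂F) ≥ s + 2. Let M = { {i+2, 2s+3−i} : 1 ≤ i ≤ s }. Then for any two distinct e₁, e₂ ∈ M, no 3-element subset of e₁ ∪ e₂ is an edge of F. -/

import Mathlib

open Finset

/-- `F₁ ≺ F₂`: same size, and the `i`-th smallest element of `F₁` is at most
the `i`-th smallest element of `F₂`. -/
def PrecS (A B : Finset ℕ) : Prop :=
  A.card = B.card ∧
    ∀ i, i < A.card → (A.sort (· ≤ ·)).getD i 0 ≤ (B.sort (· ≤ ·)).getD i 0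

/-- A family of subsets of `[n] = {1,…,n}` is stable (shifted). -/
def IsStable (n : ℕ) (F : Finset (Finset ℕ)) : Prop :=
  ∀ A B : Finset ℕ, A ⊆ Finset.Icc 1 n → B ∈ F → PrecS A B → A ∈ F

/-- Property `U(s, q)`: any `s` edges (repetitions allowed) have union of size at most `q`. -/
def HasU (F : Finset (Finset ℕ)) (s q : ℕ) : Prop :=
  ∀ f : Fin s → Finset ℕ, (∀ i, f i ∈ F) → (Finset.univ.biUnion f).card ≤ q

/-- Matching number: the maximum size of a set of pairwise disjoint edges of `F`. -/
def matchNum (F : Finset (Finset ℕ)) : ℕ :=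
  (F.powerset.filter fun M => ∀ a ∈ M, ∀ b ∈ M, a ≠ b → Disjoint a b).sup Finset.card

/-- Shadow of a 3-uniform family: all 2-element subsets of its edges. -/
def shadow2 (F : Finset (Finset ℕ)) : Finset (Finset ℕ) :=
  F.biUnion fun f => f.powersetCard 2

/-- Deletion of the first `i` vertices: edges disjoint from `[i] = {1,…,i}`. -/
def del (F : Finset (Finset ℕ)) (i : ℕ) : Finset (Finset ℕ) :=
  F.filter fun e => Disjoint e (Finset.Icc 1 i)

/-!
For every `2 ≤ k ≤ s + 2` the triple `{1, k, 2s + 5 - k}` is an edge of `F`: a matching of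
`s + 2` pairs in the shadow contains a pair inside `[k, ∞)` with an element `≥ 2s + 5 - k`, and
stability pushes the edge containing that pair down to `{1, k, 2s + 5 - k}`. The pairs
`{k, 2s + 5 - k}` are pairwise disjoint, and `M` consists of those with `k ≥ 3`. So an edge
`f ⊆ e₁ ∪ e₂` together with the `s - 1` edges `{1, k, 2s + 5 - k}` for the remaining
`k ∈ [2, s + 2]` would be `s` edges covering `3 + 1 + 2 (s - 1) = 2s + 2` vertices, contradicting
`U(s, 2s + 1)`.
-/

lemma sort_triple {a b c : ℕ} (hab : a < b) (hbc : b < c) :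
    ({a, b, c} : Finset ℕ).sort (· ≤ ·) = [a, b, c] := by
  rw [sort_insert _ (by simp only [mem_insert, mem_singleton, forall_eq_or_imp, forall_eq]; omega)
      (by simp only [mem_insert, mem_singleton]; omega),
    sort_insert _ (by simp only [mem_singleton, forall_eq]; omega)
      (by simp only [mem_singleton]; omega), sort_singleton]

lemma exists_eq_triple_of_card_eq_three {g : Finset ℕ} (hg : g.card = 3) :
    ∃ p q r, p < q ∧ q < r ∧ g = {p, q, r} := by
  obtain ⟨p, q, r, hsort⟩ :=
    List.length_eq_three.mp ((length_sort (s := g) (· ≤ ·)).trans hg)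
  have hlt := (sortedLT_sort g).pairwise
  rw [hsort] at hlt
  simp only [List.pairwise_cons, List.mem_cons, List.not_mem_nil] at hlt
  refine ⟨p, q, r, hlt.1 q (by simp), hlt.2.1 r (by simp), ?_⟩
  ext x
  rw [← mem_sort (· ≤ ·), hsort]
  simp

lemma precS_triple {a b c a' b' c' : ℕ} (hab : a < b) (hbc : b < c) (hab' : a' < b')
    (hbc' : b' < c') (ha : a ≤ a') (hb : b ≤ b') (hc : c ≤ c') :
    PrecS {a, b, c} {a', b', c'} := by
  have hcard : ∀ {x y z : ℕ}, x < y → y < z → ({x, y, z} : Finset ℕ).card = 3 :=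
    fun hxy hyz => card_eq_three.mpr ⟨_, _, _, hxy.ne, (hxy.trans hyz).ne, hyz.ne, rfl⟩
  refine ⟨by rw [hcard hab hbc, hcard hab' hbc'], fun i hi => ?_⟩
  rw [hcard hab hbc] at hi
  rw [sort_triple hab hbc, sort_triple hab' hbc']
  interval_cases i <;> simpa

lemma IsStable.one_mem_of_le {n : ℕ} {F : Finset (Finset ℕ)}
    (hF : ∀ e ∈ F, e ⊆ Icc 1 n ∧ e.card = 3) (hst : IsStable n F) {g : Finset ℕ} (hg : g ∈ F)
    {x y : ℕ} (hx : x ∈ g) (hy : y ∈ g) (hxy : x ≠ y) {b c : ℕ} (h1b : 1 < b) (hbc : b < c)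
    (hbx : b ≤ x) (hby : b ≤ y) (hcy : c ≤ y) : ({1, b, c} : Finset ℕ) ∈ F := by
  obtain ⟨p, q, r, hpq, hqr, rfl⟩ := exists_eq_triple_of_card_eq_three (hF _ hg).2
  have hrange := (hF _ hg).1
  have hp : 1 ≤ p := (mem_Icc.mp (hrange (by simp))).1
  have hr : r ≤ n := (mem_Icc.mp (hrange (by simp))).2
  simp only [mem_insert, mem_singleton] at hx hy
  refine hst _ _ (fun z hz => ?_) hg (precS_triple h1b hbc hpq hqr hp (by omega) (by omega))
  simp only [mem_insert, mem_singleton] at hz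
  rw [mem_Icc]
  omega

lemma exists_pairwiseDisjoint_of_le_matchNum {F : Finset (Finset ℕ)} {m : ℕ} (hm : 0 < m)
    (h : m ≤ matchNum F) :
    ∃ M ⊆ F, (M : Set (Finset ℕ)).PairwiseDisjoint id ∧ m ≤ M.card := by
  obtain ⟨M, hM, hcard⟩ := (Finset.le_sup_iff hm).mp h
  rw [mem_filter, mem_powerset] at hM
  exact ⟨M, hM.1, fun a ha b hb hab => hM.2 a ha b hb hab, hcard⟩

lemma mem_shadow2 {F : Finset (Finset ℕ)} {q : Finset ℕ} :
    q ∈ shadow2 F ↔ q.card = 2 ∧ ∃ g ∈ F, q ⊆ g := by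
  simp only [shadow2, mem_biUnion, mem_powersetCard]
  tauto

section PairwiseDisjoint

variable {α : Type*} [DecidableEq α] {M : Finset (Finset α)}

lemma card_filter_not_disjoint_le (hM : (M : Set (Finset α)).PairwiseDisjoint id)
    (S : Finset α) : (M.filter fun q => ¬Disjoint q S).card ≤ S.card := by
  set B := M.filter fun q => ¬Disjoint q S
  have hB : (B : Set (Finset α)).PairwiseDisjoint (· ∩ S) :=
    (hM.subset (coe_subset.mpr (filter_subset _ _))).mono fun _ => inter_subset_left
  calc B.card = ∑ _q ∈ B, 1 := by simp
    _ ≤ ∑ q ∈ B, (q ∩ S).card := sum_le_sum fun q hq =>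
        card_pos.mpr (not_disjoint_iff_nonempty_inter.mp (mem_filter.mp hq).2)
    _ = (B.biUnion (· ∩ S)).card := (card_biUnion hB).symm
    _ ≤ S.card := card_le_card (biUnion_subset.mpr fun _ _ => inter_subset_right)

lemma two_mul_card_le_of_pairwiseDisjoint (hM : (M : Set (Finset α)).PairwiseDisjoint id)
    (h2 : ∀ q ∈ M, q.card = 2) {S : Finset α} (hS : ∀ q ∈ M, q ⊆ S) :
    2 * M.card ≤ S.card :=
  calc 2 * M.card = ∑ q ∈ M, q.card := by rw [sum_congr rfl h2]; simp [mul_comm]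
    _ = (M.biUnion id).card := (card_biUnion hM).symm
    _ ≤ S.card := card_le_card (biUnion_subset.mpr hS)

end PairwiseDisjoint

/- At most `k - 1` pairs of the matching meet `[1, k)`; the remaining ones cannot all fit into
`[k, 2 |M| + 1 - k)`, which has fewer than `2 (|M| + 1 - k)` elements. -/
lemma exists_pair_ge_of_pairwiseDisjoint {M : Finset (Finset ℕ)}
    (hM : (M : Set (Finset ℕ)).PairwiseDisjoint id) (h2 : ∀ q ∈ M, q.card = 2)
    (hpos : ∀ q ∈ M, 0 ∉ q) {k : ℕ} (hk : 1 ≤ k) (hkM : k ≤ M.card) :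
    ∃ q ∈ M, (∀ x ∈ q, k ≤ x) ∧ ∃ y ∈ q, 2 * M.card + 1 - k ≤ y := by
  set A := M.filter fun q => Disjoint q (Ico 1 k)
  have hlarge : ∀ q ∈ A, ∀ x ∈ q, k ≤ x := by
    intro q hq x hx
    obtain ⟨hqM, hdisj⟩ := mem_filter.mp hq
    have hx0 : x ≠ 0 := fun h => hpos q hqM (h ▸ hx)
    have hxI : x ∉ Ico 1 k := disjoint_left.mp hdisj hx
    rw [mem_Ico] at hxI
    omega
  have hA : M.card ≤ A.card + (k - 1) := by
    have hmeet := card_filter_not_disjoint_le hM (Ico 1 k)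
    rw [Nat.card_Ico] at hmeet
    have hsplit : A.card + (M.filter fun q => ¬Disjoint q (Ico 1 k)).card = M.card :=
      card_filter_add_card_filter_not _
    omega
  by_contra! hsmall
  have hAsub : ∀ q ∈ A, q ⊆ Ico k (2 * M.card + 1 - k) := by
    intro q hq x hx
    exact mem_Ico.mpr ⟨hlarge q hq x hx, hsmall q (mem_filter.mp hq).1 (hlarge q hq) x hx⟩
  have hfit := two_mul_card_le_of_pairwiseDisjoint (M := A)
    (hM.subset (coe_subset.mpr (filter_subset _ _))) (fun q hq => h2 q (mem_filter.mp hq).1) hAsub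
  rw [Nat.card_Ico] at hfit
  omega

/-- The matching `M` of the statement consists of the pairs `mirrorPair s k` with
`3 ≤ k ≤ s + 2`. -/
def mirrorPair (s k : ℕ) : Finset ℕ := {k, 2 * s + 5 - k}

lemma IsStable.insert_one_mirrorPair_mem {n s : ℕ} {F : Finset (Finset ℕ)}
    (hF : ∀ e ∈ F, e ⊆ Icc 1 n ∧ e.card = 3) (hst : IsStable n F)
    (hnus : s + 2 ≤ matchNum (shadow2 F)) {k : ℕ} (hk2 : 2 ≤ k) (hks : k ≤ s + 2) :
    insert 1 (mirrorPair s k) ∈ F := by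
  obtain ⟨M, hMsub, hM, hMcard⟩ := exists_pairwiseDisjoint_of_le_matchNum (by omega) hnus
  have hshadow : ∀ q ∈ M, q.card = 2 ∧ ∃ g ∈ F, q ⊆ g := fun q hq => mem_shadow2.mp (hMsub hq)
  have hpos : ∀ q ∈ M, 0 ∉ q := by
    intro q hq h0
    obtain ⟨g, hg, hqg⟩ := (hshadow q hq).2
    simpa using (hF g hg).1 (hqg h0)
  obtain ⟨q, hqM, hlarge, y, hyq, hy⟩ := exists_pair_ge_of_pairwiseDisjoint hM
    (fun q hq => (hshadow q hq).1) hpos (k := k) (by omega) (by omega)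
  obtain ⟨hq2, g, hg, hqg⟩ := hshadow q hqM
  obtain ⟨x, hxq, hxy⟩ := exists_mem_ne (s := q) (by omega) y
  exact hst.one_mem_of_le hF hg (hqg hxq) (hqg hyq) hxy (by omega) (by omega)
    (hlarge x hxq) (hlarge y hyq) (by omega)

lemma card_mirrorPair {s k : ℕ} (hk : k ≤ s + 2) : (mirrorPair s k).card = 2 :=
  card_pair (by omega)

lemma two_le_of_mem_mirrorPair {s k x : ℕ} (hk : 2 ≤ k) (hks : k ≤ s + 2)
    (hx : x ∈ mirrorPair s k) : 2 ≤ x := by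
  simp only [mirrorPair, mem_insert, mem_singleton] at hx
  omega

lemma pairwiseDisjoint_mirrorPair (s : ℕ) :
    (Set.Iic (s + 2)).PairwiseDisjoint (mirrorPair s) := by
  intro a ha b hb hab
  simp only [Set.mem_Iic] at ha hb
  simp only [Function.onFun, mirrorPair, disjoint_insert_left, disjoint_singleton_left,
    mem_insert, mem_singleton]
  omega

lemma HasU.card_biUnion_le {F : Finset (Finset ℕ)} {s q : ℕ} (hU : HasU F s q)
    {E : Finset (Finset ℕ)} (hEF : E ⊆ F) (hEs : E.card ≤ s) {e₀ : Finset ℕ} (he₀ : e₀ ∈ E) :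
    (E.biUnion id).card ≤ q := by
  set f : Fin s → Finset ℕ := fun i => E.toList.getD i e₀
  have hfE : ∀ i, f i ∈ E := by
    intro i
    by_cases hi : (i : ℕ) < E.toList.length
    · rw [show f i = E.toList[(i : ℕ)] from List.getD_eq_getElem _ _ hi]
      exact mem_toList.mp (List.getElem_mem hi)
    · rwa [show f i = e₀ from List.getD_eq_default _ _ (not_lt.mp hi)]
  refine le_trans (card_le_card fun x hx => ?_) (hU f fun i => hEF (hfE i))
  obtain ⟨e, he, hxe⟩ := mem_biUnion.mp hx
  obtain ⟨i, hi, rfl⟩ := List.mem_iff_getElem.mp (mem_toList.mpr he)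
  have hi' : i < s := (length_toList E ▸ hi).trans_le hEs
  have hfi : f ⟨i, hi'⟩ = E.toList[i] := List.getD_eq_getElem _ _ hi
  exact mem_biUnion.mpr ⟨⟨i, hi'⟩, mem_univ _, hfi ▸ hxe⟩

lemma card_insert_one_union_biUnion_mirrorPair {s a b : ℕ} {K f : Finset ℕ}
    (ha : 2 ≤ a) (has : a ≤ s + 2) (hb : 2 ≤ b) (hbs : b ≤ s + 2)
    (hK : ∀ k ∈ K, 2 ≤ k ∧ k ≤ s + 2 ∧ k ≠ a ∧ k ≠ b)
    (hf : f ⊆ mirrorPair s a ∪ mirrorPair s b) :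
    (insert 1 (f ∪ K.biUnion (mirrorPair s))).card = f.card + 2 * K.card + 1 := by
  have hdisj := pairwiseDisjoint_mirrorPair s
  have hKdisj : (K : Set ℕ).PairwiseDisjoint (mirrorPair s) :=
    hdisj.subset fun k hk => Set.mem_Iic.mpr (hK k hk).2.1
  have hfK : Disjoint f (K.biUnion (mirrorPair s)) := by
    refine (disjoint_biUnion_right _ _ _).mpr fun k hk => disjoint_of_subset_left hf ?_
    obtain ⟨-, hks, hka, hkb⟩ := hK k hk
    exact disjoint_union_left.mpr ⟨hdisj (Set.mem_Iic.mpr has) (Set.mem_Iic.mpr hks) hka.symm,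
      hdisj (Set.mem_Iic.mpr hbs) (Set.mem_Iic.mpr hks) hkb.symm⟩
  have h1 : 1 ∉ f ∪ K.biUnion (mirrorPair s) := by
    simp only [mem_union, mem_biUnion, not_or, not_exists, not_and]
    refine ⟨fun h1f => ?_, fun k hk h1k => ?_⟩
    · rcases mem_union.mp (hf h1f) with h | h
      · exact absurd (two_le_of_mem_mirrorPair ha has h) (by omega)
      · exact absurd (two_le_of_mem_mirrorPair hb hbs h) (by omega)
    · exact absurd (two_le_of_mem_mirrorPair (hK k hk).1 (hK k hk).2.1 h1k) (by omega)
  rw [card_insert_of_notMem h1, card_union_of_disjoint hfK, card_biUnion hKdisj,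
    sum_congr rfl fun k hk => card_mirrorPair (hK k hk).2.1, sum_const, smul_eq_mul, mul_comm]

lemma notMem_of_subset_union_mirrorPair {s : ℕ} {F : Finset (Finset ℕ)} (hs : 2 ≤ s)
    (hU : HasU F s (2 * s + 1))
    (hmirror : ∀ k, 2 ≤ k → k ≤ s + 2 → insert 1 (mirrorPair s k) ∈ F)
    {a b : ℕ} (ha : 2 ≤ a) (has : a ≤ s + 2) (hb : 2 ≤ b) (hbs : b ≤ s + 2) (hab : a ≠ b)
    {f : Finset ℕ} (hf : f ⊆ mirrorPair s a ∪ mirrorPair s b) (hf3 : f.card = 3) : f ∉ F := by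
  intro hfF
  set K := ((Icc 2 (s + 2)).erase a).erase b
  have hK : ∀ k ∈ K, 2 ≤ k ∧ k ≤ s + 2 ∧ k ≠ a ∧ k ≠ b := by
    intro k hk
    simp only [K, mem_erase, mem_Icc] at hk
    omega
  have hKcard : K.card = s - 1 := by
    rw [card_erase_of_mem (by simp only [mem_erase, mem_Icc]; omega),
      card_erase_of_mem (by simp only [mem_Icc]; omega), Nat.card_Icc]
    omega
  obtain ⟨k₀, hk₀⟩ : K.Nonempty := card_pos.mp (by omega)
  set E := insert f (K.image fun k => insert 1 (mirrorPair s k))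
  have hEF : E ⊆ F := insert_subset hfF (image_subset_iff.mpr fun k hk =>
    hmirror k (hK k hk).1 (hK k hk).2.1)
  have hEcard : E.card ≤ s := (card_insert_le _ _).trans (by
    have hK' := card_image_le (s := K) (f := fun k => insert 1 (mirrorPair s k))
    omega)
  have hcover : insert 1 (f ∪ K.biUnion (mirrorPair s)) ⊆ E.biUnion id := by
    rw [biUnion_insert, image_biUnion, id]
    intro x hx
    rcases mem_insert.mp hx with rfl | hx
    · exact mem_union_right _ (mem_biUnion.mpr ⟨k₀, hk₀, mem_insert_self _ _⟩)
    rcases mem_union.mp hx with hxf | hxK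
    · exact mem_union_left _ hxf
    · obtain ⟨k, hk, hxk⟩ := mem_biUnion.mp hxK
      exact mem_union_right _ (mem_biUnion.mpr ⟨k, hk, mem_insert_of_mem hxk⟩)
  have hcovered := card_le_card hcover
  rw [card_insert_one_union_biUnion_mirrorPair ha has hb hbs hK hf, hf3, hKcard] at hcovered
  have hbound := hU.card_biUnion_le hEF hEcard (mem_insert_self f _)
  omega

theorem no_triple_in_two_edges_general (n s : ℕ)
    (F : Finset (Finset ℕ))
    (hF : ∀ e ∈ F, e ⊆ Finset.Icc 1 n ∧ e.card = 3)
    (hst : IsStable n F)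
    (hU : HasU F s (2 * s + 1))
    (hnus : s + 2 ≤ matchNum (shadow2 F)) :
    ∀ e₁ ∈ (Finset.Icc 1 s).image (fun i => ({i + 2, 2 * s + 3 - i} : Finset ℕ)),
      ∀ e₂ ∈ (Finset.Icc 1 s).image (fun i => ({i + 2, 2 * s + 3 - i} : Finset ℕ)),
        e₁ ≠ e₂ → ∀ f : Finset ℕ, f ⊆ e₁ ∪ e₂ → f.card = 3 → f ∉ F := by
  intro e₁ he₁ e₂ he₂ hne f hf hf3
  obtain ⟨i, hi, rfl⟩ := mem_image.mp he₁
  obtain ⟨j, hj, rfl⟩ := mem_image.mp he₂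
  rw [mem_Icc] at hi hj
  have hij : i ≠ j := by
    rintro rfl
    exact hne rfl
  have hpair : ∀ i ≤ s, ({i + 2, 2 * s + 3 - i} : Finset ℕ) = mirrorPair s (i + 2) := by
    intro i hi
    rw [mirrorPair, show 2 * s + 5 - (i + 2) = 2 * s + 3 - i by omega]
  rw [hpair i hi.2, hpair j hj.2] at hf
  exact notMem_of_subset_union_mirrorPair (by omega) hU
    (fun k hk2 hks => hst.insert_one_mirrorPair_mem hF hnus hk2 hks)
    (by omega) (by omega) (by omega) (by omega) (by omega) hf hf3

/-- Claim 4 of Lemma 3.2: for distinct e₁, e₂ in the matching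
M = {{i+2, 2s+3-i} : 1 ≤ i ≤ s}, no triple inside e₁ ∪ e₂ is an edge of F. -/
theorem no_triple_in_two_edges (n s : ℕ) (hs : 3 ≤ s) (hn : 2 * s + 4 ≤ n)
    (F : Finset (Finset ℕ))
    (hF : ∀ e ∈ F, e ⊆ Finset.Icc 1 n ∧ e.card = 3)
    (hst : IsStable n F)
    (hU : HasU F s (2 * s + 1))
    (hnu : 2 ≤ matchNum F)
    (hnus : s + 2 ≤ matchNum (shadow2 F)) :
    ∀ e₁ ∈ (Finset.Icc 1 s).image (fun i => ({i + 2, 2 * s + 3 - i} : Finset ℕ)),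
      ∀ e₂ ∈ (Finset.Icc 1 s).image (fun i => ({i + 2, 2 * s + 3 - i} : Finset ℕ)),
        e₁ ≠ e₂ → ∀ f : Finset ℕ, f ⊆ e₁ ∪ e₂ → f.card = 3 → f ∉ F :=
  no_triple_in_two_edges_general n s F hF hst hU hnus
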